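/- Optimistic set, membership case: for every interpretation ℓ of logical variables and every configuration (s, (E,R), G_node) satisfying the loop invariant LI and the invariant (in particular INV_ALG(i), INV_ALG(ii) and INV_ORD below), if curr.val = arg(E(myEid)) — the current node's value equals the argument of the current contains event myEid — then there is no event i with E(i) = (_, remove, arg(E(myEid)), true) such that insOf(E, curr) R i R myEid; i.e., no successful remove of that value lies strictly between the insert of curr and the current contains in the real-time order. -/
import Mathlib


/-- Operations of the Optimistic set. -/
inductive SOp where
  | ins
  | rem
  | cont
deriving DecidableEq

/-- A node of the Optimistic set's linked list. -/
structure SNode (NodeID Val : Type) where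
  val : Val
  marked : Bool
  next : NodeID

/-- A configuration of the Optimistic set: the heap of nodes `dom(s)`, an
abstract history `(E, R)` whose events have operations `insert`/`remove`/
`contains`, value arguments and boolean results (`none` = `todo`), and the
ghost map `G_node` from event identifiers to node identifiers. -/
structure OSConfig (NodeID EventID Val : Type) where
  nodes : Set NodeID
  node : NodeID → SNode NodeID Val
  ids : Set EventID
  op : EventID → SOp
  arg : EventID → Val
  res : EventID → Option Bool
  rt : EventID → EventID → Prop
  Gnode : EventID → Option NodeID

variable {NodeID EventID Val : Type}

/-- `n ⇝_s n'`: reachability along `next`-pointers. -/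
def reach (κ : OSConfig NodeID EventID Val) (n n' : NodeID) : Prop :=
  Relation.ReflTransGen (fun a b => (κ.node a).next = b) n n'

/-- `insOf(E, n) = e`: `e` is the insert event associated with node `n`. -/
def IsInsOf (κ : OSConfig NodeID EventID Val) (n : NodeID) (e : EventID) : Prop :=
  e ∈ κ.ids ∧ κ.op e = SOp.ins ∧ κ.Gnode e = some n

/-- `remOf(E, n) = e`: `e` is the remove event associated with node `n`. -/
def IsRemOf (κ : OSConfig NodeID EventID Val) (n : NodeID) (e : EventID) : Prop :=
  e ∈ κ.ids ∧ κ.op e = SOp.rem ∧ κ.Gnode e = some n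

/-- The loop invariant `LI` of `locate` as called from the `contains`
operation `myEid` with current node `curr`: for every node `n'` holding the
sought value, if `n'` is reachable from `curr` then it is unmarked or its
remove is concurrent with `myEid`; if `n'` is unreachable from `curr` then it
is marked or its insert is concurrent with `myEid`. -/
def LoopInv (κ : OSConfig NodeID EventID Val) (curr : NodeID)
    (myEid : EventID) : Prop :=
  ∀ n' : NodeID,
    (reach κ curr n' → (κ.node n').val = κ.arg myEid →
      ((κ.node n').marked = false ∨
        ∀ r, IsRemOf κ n' r → ¬ κ.rt r myEid)) ∧
    (¬ reach κ curr n' → (κ.node n').val = κ.arg myEid →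
      ((κ.node n').marked = true ∨
        ∀ e, IsInsOf κ n' e → ¬ κ.rt e myEid))

/-- The parts of the Optimistic-set invariant used in the `contains` lemmas:
history well-formedness, `INV_ORD`, `INV_ALG(i)`, `INV_ALG(ii)`,
`INV_WF(i)` and `INV_WF(ii)`. -/
def OSInvariant (κ : OSConfig NodeID EventID Val) : Prop :=
  -- R transitive and irreflexive, uncompleted events maximal
  (∀ a b c, κ.rt a b → κ.rt b c → κ.rt a c) ∧
  (∀ a, ¬ κ.rt a a) ∧
  (∀ i ∈ κ.ids, κ.res i = none → ∀ j, ¬ κ.rt i j) ∧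
  -- INV_ORD: distinct completed insert and remove events are linearly ordered
  (∀ e e', e ∈ κ.ids → e' ∈ κ.ids → e ≠ e' →
    κ.res e ≠ none → κ.res e' ≠ none →
    κ.op e ≠ SOp.cont → κ.op e' ≠ SOp.cont →
    (κ.rt e e' ∨ κ.rt e' e)) ∧
  -- INV_ALG(i)
  (∀ n ∈ κ.nodes, (κ.node n).marked = false →
    (∃ e, IsInsOf κ n e) ∧ (¬ ∃ r, IsRemOf κ n r) ∧
    (∀ e i, IsInsOf κ n e → κ.rt e i → κ.res i = some true →
      κ.op i = SOp.cont)) ∧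
  -- INV_ALG(ii)
  (∀ n ∈ κ.nodes, (κ.node n).marked = true →
    (∃ e, IsInsOf κ n e) ∧ (∃ r, IsRemOf κ n r) ∧
    (∀ e r i, IsInsOf κ n e → IsRemOf κ n r →
      κ.rt e i → κ.rt i r → κ.res i = some true → κ.op i = SOp.cont)) ∧
  -- INV_WF(i): an event returned true iff it has an associated node
  (∀ e ∈ κ.ids, (κ.res e = some true ↔ κ.Gnode e ≠ none)) ∧
  -- INV_WF(ii): the argument of an event is the value of its node
  (∀ e n, κ.Gnode e = some n → κ.arg e = (κ.node n).val)

/-- **Optimistic set, membership case (Lemma B.1 of the paper).** In every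
configuration satisfying the loop invariant and the invariant (in particular
`INV_ALG(i)`, `INV_ALG(ii)` and `INV_ORD`), if the current node's value
equals the argument of the current `contains` event `myEid`, then no
successful remove of that value lies strictly between the insert of `curr`
and `myEid` in the real-time order. -/
theorem optimistic_set_membership_case
    {NodeID EventID Val : Type}
    (κ : OSConfig NodeID EventID Val)
    (hinv : OSInvariant κ)
    (curr : NodeID) (hcurr : curr ∈ κ.nodes)
    (myEid : EventID)
    (hmy : myEid ∈ κ.ids ∧ κ.op myEid = SOp.cont)
    (hLI : LoopInv κ curr myEid)
    (hval : (κ.node curr).val = κ.arg myEid) :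
    ¬ ∃ i e, i ∈ κ.ids ∧ κ.op i = SOp.rem ∧ κ.arg i = κ.arg myEid ∧
      κ.res i = some true ∧
      IsInsOf κ curr e ∧ κ.rt e i ∧ κ.rt i myEid := by
  rintro ⟨i, e, hi_ids, hi_rem, _, hi_res, hins, hrt_ei, hrt_imy⟩
  obtain ⟨htrans, hirr, _, hord, halg1, halg2, hwf1, _⟩ := hinv
  have hcont : κ.op i = SOp.cont → False := by
    intro h; rw [hi_rem] at h; exact SOp.noConfusion h
  cases hmk : (κ.node curr).marked with
  | false =>
    exact hcont ((halg1 curr hcurr hmk).2.2 e i hins hrt_ei hi_res)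
  | true =>
    obtain ⟨_, ⟨r, hr⟩, hbet⟩ := halg2 curr hcurr hmk
    have hLIc := (hLI curr).1 Relation.ReflTransGen.refl hval
    rcases hLIc with h | hnr
    · rw [hmk] at h; exact Bool.noConfusion h
    have hnrmy : ¬ κ.rt r myEid := hnr r hr
    have hr_res : κ.res r = some true :=
      (hwf1 r hr.1).mpr (by rw [hr.2.2]; simp)
    by_cases hir : i = r
    · exact hnrmy (hir ▸ hrt_imy)
    · rcases hord i r hi_ids hr.1 hir (by rw [hi_res]; simp) (by rw [hr_res]; simp)
        (by rw [hi_rem]; simp) (by rw [hr.2.1]; simp) with h | h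
      · exact hcont (hbet e r i hins hr hrt_ei h hi_res)
      · exact hnrmy (htrans r i myEid h hrt_imy)
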